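/- (Proposition 1) Let N_A, N_B ≥ 2 and let ψ : Matrix (Fin N_A) (Fin N_B) ℂ be a normalized pure state, i.e. ‖ψ‖_HS = 1, with associated pure-state density matrix ρ_ψ((m,μ),(n,ν)) = ψ(m,μ) · conj(ψ(n,ν)). Then ‖RM(ρ_ψ)‖_tr ≥ 1, and equality ‖RM(ρ_ψ)‖_tr = 1 holds if and only if ψ has rank 1, i.e. there exist vectors a ∈ (Fin N_A → ℂ) and b ∈ (Fin N_B → ℂ) with ψ(m,μ) = a(m)·b(μ) for all m, μ (equivalently, the pure state ρ_ψ is separable). -/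

import Mathlib

open Matrix Kronecker Complex ComplexOrder

noncomputable def traceNorm {m n : Type*} [Fintype m] [Fintype n] [DecidableEq n]
    (M : Matrix m n ℂ) : ℝ :=
  ((((Matrix.posSemidef_conjTranspose_mul_self M).1.eigenvectorUnitary : Matrix n n ℂ) *
      diagonal (((↑) : ℝ → ℂ) ∘ Real.sqrt ∘ (Matrix.posSemidef_conjTranspose_mul_self M).1.eigenvalues) *
      (star ((Matrix.posSemidef_conjTranspose_mul_self M).1.eigenvectorUnitary : Matrix n n ℂ)))).trace.re

def realign {NA NB : ℕ} (ρ : Matrix (Fin NA × Fin NB) (Fin NA × Fin NB) ℂ) :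
    Matrix (Fin NA × Fin NA) (Fin NB × Fin NB) ℂ :=
  fun p q => ρ (p.1, q.1) (p.2, q.2)

def IsDensityMatrix {n : Type*} [Fintype n] (ρ : Matrix n n ℂ) : Prop :=
  ρ.PosSemidef ∧ ρ.trace = 1

noncomputable def hsNorm {m n : Type*} [Fintype m] [Fintype n] (M : Matrix m n ℂ) : ℝ :=
  Real.sqrt (∑ i, ∑ j, ‖M i j‖ ^ 2)

noncomputable def hsInner {m n : Type*} [Fintype m] [Fintype n] (X Y : Matrix m n ℂ) : ℂ :=
  (Xᴴ * Y).trace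

noncomputable def marginalA {NA NB : ℕ} (ρ : Matrix (Fin NA × Fin NB) (Fin NA × Fin NB) ℂ) :
    Matrix (Fin NA) (Fin NA) ℂ :=
  fun m n => ∑ μ, ρ (m, μ) (n, μ)

noncomputable def marginalB {NA NB : ℕ} (ρ : Matrix (Fin NA × Fin NB) (Fin NA × Fin NB) ℂ) :
    Matrix (Fin NB) (Fin NB) ℂ :=
  fun μ ν => ∑ m, ρ (m, μ) (m, ν)

def SeparableState {NA NB : ℕ} (ρ : Matrix (Fin NA × Fin NB) (Fin NA × Fin NB) ℂ) : Prop :=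
  ∃ (ι : Type) (s : Finset ι) (p : ι → ℝ)
    (ρA : ι → Matrix (Fin NA) (Fin NA) ℂ) (ρB : ι → Matrix (Fin NB) (Fin NB) ℂ),
    (∀ i ∈ s, 0 < p i) ∧ (∑ i ∈ s, p i = 1) ∧
    (∀ i ∈ s, IsDensityMatrix (ρA i)) ∧ (∀ i ∈ s, IsDensityMatrix (ρB i)) ∧
    ρ = ∑ i ∈ s, (p i : ℂ) • (ρA i ⊗ₖ ρB i)

noncomputable def l2OpNorm {n : Type*} [Fintype n] [DecidableEq n] (M : Matrix n n ℂ) : ℝ :=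
  ‖Matrix.toEuclideanCLM (𝕜 := ℂ) (n := n) M‖

/-! With `T = ψᴴ ψ`, the Gram matrix of the realigned pure state factors as `T ⊗ Tᵀ`, so its
square root is `√T ⊗ (√T)ᵀ` and `‖RM(ρ_ψ)‖_tr = (tr √T)² = (∑ σᵢ)²`, where `σᵢ = √λᵢ(T)` are the
singular values of `ψ`. Since `∑ σᵢ² = tr T = ‖ψ‖²_HS = 1`, this is at least `1`, with equality
iff at most one `σᵢ` is nonzero, i.e. iff `rank ψ ≤ 1`. -/

section
open scoped MatrixOrder

variable {𝕜 n : Type*} [RCLike 𝕜] [Fintype n] [DecidableEq n]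

lemma Matrix.IsHermitian.trace_cfc {A : Matrix n n 𝕜} (hA : A.IsHermitian) (f : ℝ → ℝ) :
    (cfc f A).trace = ∑ i, (f (hA.eigenvalues i) : 𝕜) := by
  rw [hA.cfc_eq, IsHermitian.cfc, Unitary.conjStarAlgAut_apply, trace_mul_cycle,
    Unitary.star_mul_self_of_mem hA.eigenvectorUnitary.2, one_mul, trace_diagonal]
  rfl

lemma Matrix.PosSemidef.trace_sqrt {A : Matrix n n 𝕜} (hA : A.PosSemidef) :
    (CFC.sqrt A).trace = ∑ i, (√(hA.1.eigenvalues i) : 𝕜) := by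
  rw [CFC.sqrt_eq_real_sqrt A hA.nonneg, cfcₙ_eq_cfc, hA.1.trace_cfc]

lemma Matrix.PosSemidef.sqrt_transpose {A : Matrix n n 𝕜} (hA : A.PosSemidef) :
    CFC.sqrt Aᵀ = (CFC.sqrt A)ᵀ := by
  refine CFC.sqrt_unique ?_ (nonneg_iff_posSemidef.mpr ?_)
  · rw [← transpose_mul, CFC.sqrt_mul_sqrt_self A hA.nonneg]
  · exact (nonneg_iff_posSemidef.mp (CFC.sqrt_nonneg A)).transpose

lemma Matrix.PosSemidef.sqrt_kronecker {m : Type*} [Fintype m] [DecidableEq m]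
    {A : Matrix m m 𝕜} {B : Matrix n n 𝕜} (hA : A.PosSemidef) (hB : B.PosSemidef) :
    CFC.sqrt (A ⊗ₖ B) = CFC.sqrt A ⊗ₖ CFC.sqrt B := by
  refine CFC.sqrt_unique ?_ (nonneg_iff_posSemidef.mpr ?_)
  · rw [← mul_kronecker_mul, CFC.sqrt_mul_sqrt_self A hA.nonneg,
      CFC.sqrt_mul_sqrt_self B hB.nonneg]
  · exact (nonneg_iff_posSemidef.mp (CFC.sqrt_nonneg A)).kronecker
      (nonneg_iff_posSemidef.mp (CFC.sqrt_nonneg B))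

lemma traceNorm_eq_re_trace_sqrt {m : Type*} [Fintype m] (M : Matrix m n ℂ) :
    traceNorm M = (CFC.sqrt (Mᴴ * M)).trace.re := by
  have hM := posSemidef_conjTranspose_mul_self M
  rw [CFC.sqrt_eq_real_sqrt _ hM.nonneg, cfcₙ_eq_cfc, hM.1.cfc_eq, IsHermitian.cfc,
    Unitary.conjStarAlgAut_apply]
  rfl

end

lemma Matrix.rank_le_one_iff_exists_mul {K m n : Type*} [Field K] [Fintype n]
    (A : Matrix m n K) : A.rank ≤ 1 ↔ ∃ (a : m → K) (b : n → K), ∀ i j, A i j = a i * b j := by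
  classical
  constructor
  · intro h
    obtain ⟨a, ha⟩ := (Submodule.finrank_le_one_iff_isPrincipal _).mp h
    have hcol : ∀ j, (fun i => A i j) ∈ K ∙ a := fun j =>
      ha ▸ ⟨Pi.single j 1, by ext i; simp [mulVec_single]⟩
    choose b hb using fun j => Submodule.mem_span_singleton.mp (hcol j)
    exact ⟨a, b, fun i j => by simpa [mul_comm] using (congrFun (hb j) i).symm⟩
  · rintro ⟨a, b, hab⟩
    have : A = vecMulVec a b := by ext i j; exact hab i j
    exact this ▸ rank_vecMulVec_le a b

lemma sq_sum_eq_sum_sq_iff {ι : Type*} [Fintype ι] {f : ι → ℝ} (hf : ∀ i, 0 ≤ f i) :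
    (∑ i, f i) ^ 2 = ∑ i, f i ^ 2 ↔ Fintype.card {i // f i ≠ 0} ≤ 1 := by
  classical
  have hsplit : (∑ i, f i) ^ 2 = ∑ i, f i ^ 2 + ∑ i, ∑ j ∈ Finset.univ.erase i, f i * f j := by
    rw [sq, Finset.sum_mul_sum, ← Finset.sum_add_distrib]
    refine Finset.sum_congr rfl fun i _ => ?_
    rw [sq, Finset.add_sum_erase _ (fun j => f i * f j) (Finset.mem_univ i)]
  have hprod : ∀ i j, 0 ≤ f i * f j := fun i j => mul_nonneg (hf i) (hf j)
  rw [hsplit, add_eq_left, Finset.sum_eq_zero_iff_of_nonneg fun i _ =>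
    Finset.sum_nonneg fun j _ => hprod i j]
  simp_rw [Finset.sum_eq_zero_iff_of_nonneg fun j _ => hprod _ j, Fintype.card_le_one_iff,
    Subtype.forall, Subtype.mk.injEq, Finset.mem_erase, mul_eq_zero]
  grind

lemma trace_conjTranspose_mul_self_eq_hsNorm_sq {m n : Type*} [Fintype m] [Fintype n]
    (M : Matrix m n ℂ) : (Mᴴ * M).trace = ((hsNorm M ^ 2 : ℝ) : ℂ) := by
  rw [hsNorm, Real.sq_sqrt (by positivity), Finset.sum_comm]
  simp [trace, mul_apply, Complex.conj_mul']

lemma conjTranspose_realign_mul_realign {NA NB : ℕ} {ψ : Matrix (Fin NA) (Fin NB) ℂ}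
    {ρ : Matrix (Fin NA × Fin NB) (Fin NA × Fin NB) ℂ}
    (hρ : ∀ m μ n ν, ρ (m, μ) (n, ν) = ψ m μ * starRingEnd ℂ (ψ n ν)) :
    (realign ρ)ᴴ * realign ρ = (ψᴴ * ψ) ⊗ₖ (ψᴴ * ψ)ᵀ := by
  ext ⟨μ, ν⟩ ⟨μ', ν'⟩
  simp only [mul_apply, conjTranspose_apply, kroneckerMap_apply, transpose_apply, realign, hρ,
    Fintype.sum_prod_type, Finset.sum_mul_sum, star_mul', RCLike.star_def, conj_conj]
  exact Finset.sum_congr rfl fun m _ => Finset.sum_congr rfl fun n _ => by ring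

lemma traceNorm_realign_pure {NA NB : ℕ} {ψ : Matrix (Fin NA) (Fin NB) ℂ}
    {ρ : Matrix (Fin NA × Fin NB) (Fin NA × Fin NB) ℂ}
    (hρ : ∀ m μ n ν, ρ (m, μ) (n, ν) = ψ m μ * starRingEnd ℂ (ψ n ν)) :
    traceNorm (realign ρ) =
      (∑ i, √((posSemidef_conjTranspose_mul_self ψ).1.eigenvalues i)) ^ 2 := by
  have hT := posSemidef_conjTranspose_mul_self ψ
  rw [traceNorm_eq_re_trace_sqrt, conjTranspose_realign_mul_realign hρ,
    hT.sqrt_kronecker hT.transpose, hT.sqrt_transpose, trace_kronecker, trace_transpose,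
    hT.trace_sqrt, ← sq]
  norm_cast

theorem traceNorm_realign_pure_ge_one_iff_separable_general
    (NA NB : ℕ)
    (ψ : Matrix (Fin NA) (Fin NB) ℂ) (hψ : hsNorm ψ = 1)
    (ρψ : Matrix (Fin NA × Fin NB) (Fin NA × Fin NB) ℂ)
    (hρψ : ∀ m μ n ν, ρψ (m, μ) (n, ν) = ψ m μ * (starRingEnd ℂ) (ψ n ν)) :
    1 ≤ traceNorm (realign ρψ) ∧
      (traceNorm (realign ρψ) = 1 ↔
        ∃ (a : Fin NA → ℂ) (b : Fin NB → ℂ), ∀ m μ, ψ m μ = a m * b μ) := by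
  have hT := posSemidef_conjTranspose_mul_self ψ
  rw [traceNorm_realign_pure hρψ]
  set s : Fin NB → ℝ := fun i => √(hT.1.eigenvalues i)
  have hs : ∀ i, 0 ≤ s i := fun i => Real.sqrt_nonneg _
  have hsum : ∑ i, s i ^ 2 = 1 := by
    have htr := hT.1.trace_eq_sum_eigenvalues
    rw [trace_conjTranspose_mul_self_eq_hsNorm_sq, hψ, one_pow] at htr
    simp only [s, Real.sq_sqrt (hT.eigenvalues_nonneg _)]
    simpa using (congrArg Complex.re htr).symm
  have hrank : ψ.rank = Fintype.card {i // s i ≠ 0} := by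
    simp only [s, ne_eq, Real.sqrt_eq_zero (hT.eigenvalues_nonneg _)]
    rw [← rank_conjTranspose_mul_self, hT.1.rank_eq_card_non_zero_eigs]
  rw [← rank_le_one_iff_exists_mul, hrank, ← sq_sum_eq_sum_sq_iff hs, hsum]
  exact ⟨hsum ▸ Finset.sum_sq_le_sq_sum_of_nonneg fun i _ => hs i, Iff.rfl⟩

theorem traceNorm_realign_pure_ge_one_iff_separable
    (NA NB : ℕ) (hNA : 2 ≤ NA) (hNB : 2 ≤ NB)
    (ψ : Matrix (Fin NA) (Fin NB) ℂ) (hψ : hsNorm ψ = 1)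
    (ρψ : Matrix (Fin NA × Fin NB) (Fin NA × Fin NB) ℂ)
    (hρψ : ∀ m μ n ν, ρψ (m, μ) (n, ν) = ψ m μ * (starRingEnd ℂ) (ψ n ν)) :
    1 ≤ traceNorm (realign ρψ) ∧
      (traceNorm (realign ρψ) = 1 ↔
        ∃ (a : Fin NA → ℂ) (b : Fin NB → ℂ), ∀ m μ, ψ m μ = a m * b μ) :=
  traceNorm_realign_pure_ge_one_iff_separable_general NA NB ψ hψ ρψ hρψ
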